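/- For a fully-commutative decreasing factorization h in the 0-Hecke monoid on which the crystal operator f_i^* is defined (i.e., f_i^*(h) ≠ 0), the result f_i^*(h) is 0-Hecke equivalent to h, has the same excess, is again fully-commutative, and agrees with h in every factor except the i-th and (i+1)-th. -/

import Mathlib

/-- One elementary relation of the 0-Hecke monoid applied somewhere inside a word
(letters are positive integers; `p + 1 < q ∨ q + 1 < p` encodes `|p - q| > 1`). -/
inductive HeckeStep : List ℕ → List ℕ → Prop
  | comm (u v : List ℕ) (p q : ℕ) (hpq : p + 1 < q ∨ q + 1 < p) :
      HeckeStep (u ++ p :: q :: v) (u ++ q :: p :: v)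
  | braid (u v : List ℕ) (p q : ℕ) :
      HeckeStep (u ++ p :: q :: p :: v) (u ++ q :: p :: q :: v)
  | idem (u v : List ℕ) (p : ℕ) :
      HeckeStep (u ++ p :: p :: v) (u ++ p :: v)

/-- 0-Hecke equivalence of words. -/
def HeckeEquiv : List ℕ → List ℕ → Prop := Relation.EqvGen HeckeStep

/-- A word contains a consecutive braid subword `i (i+1) i` or `(i+1) i (i+1)`
(the latter is the form `i (i-1) i`). -/
def ContainsBraid (w : List ℕ) : Prop :=
  ∃ (u v : List ℕ) (i : ℕ),
    w = u ++ i :: (i+1) :: i :: v ∨ w = u ++ (i+1) :: i :: (i+1) :: v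

/-- A word is fully-commutative if no 0-Hecke equivalent word contains a
consecutive braid subword. -/
def FullyCommutative (w : List ℕ) : Prop :=
  ∀ w', HeckeEquiv w w' → ¬ ContainsBraid w'

/-- The strictly decreasing word whose letters are the given finite set. -/
def descWord (s : Finset ℕ) : List ℕ := (s.sort (· ≤ ·)).reverse

/-- The Hecke word `h^m ⋯ h^2 h^1` of a decreasing factorization into `m` factors,
where (0-indexed) `h j` is the factor `h^{j+1}`; each factor is read as a strictly
decreasing word. -/
def factorWord (m : ℕ) (h : ℕ → Finset ℕ) : List ℕ :=
  ((List.range m).reverse.map (fun j => descWord (h j))).flatten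

/-- Pairing process: the letters of the upper factor, given as a list (largest
first), successively pair with the smallest yet-unpaired letter `≥` them in the
lower factor `rest`; returns the set of unpaired letters of the lower factor. -/
def pairAux : List ℕ → Finset ℕ → Finset ℕ
  | [], rest => rest
  | x :: xs, rest =>
    if hc : (rest.filter (fun a => x ≤ a)).Nonempty then
      pairAux xs (rest.erase ((rest.filter (fun a => x ≤ a)).min' hc))
    else pairAux xs rest

/-- Unpaired letters of the lower factor `a = h^i` after pairing with the upper
factor `b = h^{i+1}`. -/
def unpairedLow (a b : Finset ℕ) : Finset ℕ := pairAux (descWord b) a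

/-- The crystal operator `f^⋆` on the pair of factors `(a, b) = (h^i, h^{i+1})`. -/
def fStarPair (a b : Finset ℕ) : Option (Finset ℕ × Finset ℕ) :=
  if hU : (unpairedLow a b).Nonempty then
    let x := (unpairedLow a b).max' hU
    if x + 1 ∈ a ∧ x + 1 ∈ b then some (a.erase (x+1), insert x b)
    else some (a.erase x, insert x b)
  else none

/-- The crystal operator `f_{i+1}^⋆` (0-indexed `i`), acting on the factors
`h i` and `h (i+1)` of a decreasing factorization. -/
def fStar (i : ℕ) (h : ℕ → Finset ℕ) : Option (ℕ → Finset ℕ) :=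
  match fStarPair (h i) (h (i+1)) with
  | none => none
  | some (a, b) => some (Function.update (Function.update h i a) (i+1) b)

/-- Total number of letters of a decreasing factorization into `m` factors. -/
def totalLen (m : ℕ) (h : ℕ → Finset ℕ) : ℕ := ∑ j ∈ Finset.range m, (h j).card

/-- The length of (a reduced word for) the 0-Hecke class of `w`. -/
noncomputable def reducedLength (w : List ℕ) : ℕ :=
  sInf {k | ∃ w', HeckeEquiv w w' ∧ w'.length = k}

/-- The excess of a decreasing factorization: its total number of letters minus
the length of the underlying 0-Hecke element. -/
noncomputable def excess (m : ℕ) (h : ℕ → Finset ℕ) : ℕ :=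
  totalLen m h - reducedLength (factorWord m h)

/-! Let `x` be the largest unpaired letter of the lower factor `a = h^i` against the upper
factor `b = h^{i+1}`. Every letter of `b` in `[m, x]` is paired with a letter of `a` in
`[m, x)`, and every letter of `a` above `x` with a letter of `b` between `x` and itself. Hence
`x ∉ b`, a run `[w, x) ⊆ b` also lies in `a`, and `x + 1 ∈ a` forces `x + 1 ∈ b`. Full
commutativity rules out `c ∈ b` and `c + 1, c ∈ a` with `c - 1 ∉ b`, since moving that `c` to
the right in the word `b a` produces the braid `c (c+1) c`; applied to the bottom of a run of `b`
ending at `x - 1`, this shows `x - 1 ∉ b`. So the letters of `b` below `x` and of `a` above the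
letter removed from `a` commute with `x` (and with `x + 1`), and `f^⋆` is realised by
commutations, together with `(x+1) (x+1) = x+1` and `x = x x` when `x + 1 ∈ a ∩ b`. -/

local infix:50 " ≈ₕ " => HeckeEquiv

namespace HeckeEquiv

theorem refl (w : List ℕ) : w ≈ₕ w := Relation.EqvGen.refl w

theorem symm {w w' : List ℕ} (h : w ≈ₕ w') : w' ≈ₕ w :=
  Relation.EqvGen.symm _ _ h

theorem trans {w₁ w₂ w₃ : List ℕ} (h₁₂ : w₁ ≈ₕ w₂) (h₂₃ : w₂ ≈ₕ w₃) : w₁ ≈ₕ w₃ :=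
  Relation.EqvGen.trans _ _ _ h₁₂ h₂₃

instance : Trans HeckeEquiv HeckeEquiv HeckeEquiv := ⟨trans⟩

end HeckeEquiv

theorem HeckeStep.heckeEquiv {w w' : List ℕ} (h : HeckeStep w w') : w ≈ₕ w' :=
  Relation.EqvGen.rel _ _ h

theorem HeckeStep.append_append {w w' : List ℕ} (u v : List ℕ) (h : HeckeStep w w') :
    HeckeStep (u ++ w ++ v) (u ++ w' ++ v) := by
  cases h with
  | comm u' v' p q hpq => simpa using HeckeStep.comm (u ++ u') (v' ++ v) p q hpq
  | braid u' v' p q => simpa using HeckeStep.braid (u ++ u') (v' ++ v) p q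
  | idem u' v' p => simpa using HeckeStep.idem (u ++ u') (v' ++ v) p

theorem HeckeEquiv.append_append {w w' : List ℕ} (u v : List ℕ) (h : w ≈ₕ w') :
    u ++ w ++ v ≈ₕ u ++ w' ++ v := by
  induction h with
  | rel _ _ h => exact (h.append_append u v).heckeEquiv
  | refl => exact refl _
  | symm _ _ _ ih => exact ih.symm
  | trans _ _ _ _ _ ih₁ ih₂ => exact ih₁.trans ih₂

theorem heckeEquiv_cons_self (p : ℕ) (w : List ℕ) : p :: p :: w ≈ₕ p :: w :=
  (HeckeStep.idem [] w p).heckeEquiv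

theorem heckeEquiv_cons_comm {p : ℕ} {s : List ℕ} (hs : ∀ z ∈ s, p + 1 < z ∨ z + 1 < p) :
    p :: s ≈ₕ s ++ [p] := by
  induction s with
  | nil => exact .refl _
  | cons z s ih =>
    calc p :: z :: s
      _ ≈ₕ z :: p :: s := by simpa using (HeckeStep.comm [] s p z (hs z (by simp))).heckeEquiv
      _ ≈ₕ z :: (s ++ [p]) := by
        simpa using (ih fun y hy => hs y (by simp [hy])).append_append [z] []

theorem heckeEquiv_cons_append_pair {p q : ℕ} {s : List ℕ}
    (hp : ∀ z ∈ s, p + 1 < z ∨ z + 1 < p) (hq : ∀ z ∈ s, q + 1 < z ∨ z + 1 < q) :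
    p :: (s ++ [p, q]) ≈ₕ p :: q :: (s ++ [q]) :=
  calc p :: (s ++ [p, q])
    _ ≈ₕ p :: p :: (s ++ [q]) := by
      simpa using (heckeEquiv_cons_comm hp).symm.append_append [p] [q]
    _ ≈ₕ p :: (s ++ [q]) := heckeEquiv_cons_self p _
    _ ≈ₕ p :: (s ++ [q, q]) := by
      simpa using ((heckeEquiv_cons_self q []).append_append (p :: s) []).symm
    _ ≈ₕ p :: q :: (s ++ [q]) := by
      simpa using (heckeEquiv_cons_comm hq).symm.append_append [p] [q]

theorem ContainsBraid.append_append {w : List ℕ} (u v : List ℕ) (h : ContainsBraid w) :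
    ContainsBraid (u ++ w ++ v) := by
  obtain ⟨u', v', i, rfl | rfl⟩ := h
  · exact ⟨u ++ u', v' ++ v, i, Or.inl (by simp)⟩
  · exact ⟨u ++ u', v' ++ v, i, Or.inr (by simp)⟩

theorem FullyCommutative.of_append_append {u w v : List ℕ}
    (h : FullyCommutative (u ++ w ++ v)) : FullyCommutative w :=
  fun _ hw' hbraid => h _ (hw'.append_append u v) (hbraid.append_append u v)

theorem FullyCommutative.of_heckeEquiv {w w' : List ℕ} (h : FullyCommutative w)
    (hw : w ≈ₕ w') : FullyCommutative w' :=
  fun w'' hw'' => h w'' (hw.trans hw'')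

theorem reducedLength_congr {w w' : List ℕ} (hw : w ≈ₕ w') :
    reducedLength w = reducedLength w' := by
  unfold reducedLength
  congr 1
  ext k
  exact ⟨fun ⟨v, hv, hk⟩ => ⟨v, hw.symm.trans hv, hk⟩, fun ⟨v, hv, hk⟩ => ⟨v, hw.trans hv, hk⟩⟩

theorem mem_descWord {s : Finset ℕ} {z : ℕ} : z ∈ descWord s ↔ z ∈ s := by
  simp [descWord]

theorem length_descWord (s : Finset ℕ) : (descWord s).length = s.card := by
  simp [descWord]

theorem pairwise_descWord (s : Finset ℕ) : (descWord s).Pairwise (· > ·) := by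
  simpa [descWord, List.pairwise_reverse] using (Finset.sortedLT_sort s).pairwise

theorem countP_descWord (s : Finset ℕ) (p : ℕ → Prop) [DecidablePred p] :
    (descWord s).countP (fun z => decide (p z)) = (s.filter p).card := by
  rw [← Multiset.coe_countP, show (descWord s : Multiset ℕ) = s.val by simp [descWord],
    Multiset.countP_eq_card_filter]
  rfl

theorem descWord_eq_of_pairwise {s : Finset ℕ} {l : List ℕ} (hl : l.Pairwise (· > ·))
    (hmem : ∀ z, z ∈ l ↔ z ∈ s) : descWord s = l :=
  (pairwise_descWord s).eq_of_mem_iff hl fun z => by rw [mem_descWord, hmem]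

theorem descWord_eq_filter_append_filter {s : Finset ℕ} {lo hi : ℕ} {l : List ℕ}
    (hlo : lo ≤ hi + 1) (hl : l.Pairwise (· > ·)) (hmem : ∀ z, z ∈ l ↔ z ∈ s ∧ lo ≤ z ∧ z ≤ hi) :
    descWord s = descWord (s.filter (hi < ·)) ++ l ++ descWord (s.filter (· < lo)) := by
  refine descWord_eq_of_pairwise ?_ fun z => ?_
  · simp only [List.pairwise_append, List.mem_append, pairwise_descWord, hl, mem_descWord,
      Finset.mem_filter, hmem]
    grind
  · simp only [List.mem_append, mem_descWord, Finset.mem_filter, hmem]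
    grind

section Words

variable {a b : Finset ℕ} {c x : ℕ}

theorem not_fullyCommutative_of_mem (hcb : c ∈ b) (hca : c ∈ a) (hc1a : c + 1 ∈ a)
    (hb : ∀ z ∈ b, z < c → z + 1 < c) : ¬ FullyCommutative (descWord b ++ descWord a) := by
  set S := descWord (b.filter (· < c)) ++ descWord (a.filter (c + 1 < ·))
  have hbw : descWord b = descWord (b.filter (c < ·)) ++ [c] ++ descWord (b.filter (· < c)) :=
    descWord_eq_filter_append_filter (by omega) (by simp) (by simp; grind)
  have haw : descWord a =
      descWord (a.filter (c + 1 < ·)) ++ [c + 1, c] ++ descWord (a.filter (· < c)) :=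
    descWord_eq_filter_append_filter (by omega) (by simp) (by simp; grind)
  have hS : ∀ z ∈ S, c + 1 < z ∨ z + 1 < c := by
    simp only [S, List.mem_append, mem_descWord, Finset.mem_filter]
    grind
  intro hFC
  refine hFC (descWord (b.filter (c < ·)) ++ S ++ [c, c + 1, c] ++ descWord (a.filter (· < c)))
    ?_ ⟨descWord (b.filter (c < ·)) ++ S, descWord (a.filter (· < c)), c, Or.inl (by simp)⟩
  rw [hbw, haw]
  simpa [S] using (heckeEquiv_cons_comm hS).append_append (descWord (b.filter (c < ·)))
    ([c + 1, c] ++ descWord (a.filter (· < c)))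

theorem heckeEquiv_insert_erase (hxa : x ∈ a) (hx1a : x + 1 ∉ a) (hxb : x ∉ b)
    (hb : ∀ z ∈ b, z < x → z + 1 < x) :
    descWord b ++ descWord a ≈ₕ descWord (insert x b) ++ descWord (a.erase x) := by
  set S := descWord (b.filter (· < x)) ++ descWord (a.filter (x < ·))
  have hbw : descWord b = descWord (b.filter (x < ·)) ++ [] ++ descWord (b.filter (· < x)) :=
    descWord_eq_filter_append_filter (by omega) (by simp) (by simp; grind)
  have haw : descWord a = descWord (a.filter (x < ·)) ++ [x] ++ descWord (a.filter (· < x)) :=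
    descWord_eq_filter_append_filter (by omega) (by simp) (by simp; grind)
  have hbw' : descWord (insert x b) =
      descWord (b.filter (x < ·)) ++ [x] ++ descWord (b.filter (· < x)) := by
    rw [descWord_eq_filter_append_filter (lo := x) (hi := x) (l := [x]) (by omega) (by simp)
      (by simp; grind)]
    simp [Finset.filter_insert]
  have haw' : descWord (a.erase x) =
      descWord (a.filter (x < ·)) ++ [] ++ descWord (a.filter (· < x)) := by
    rw [descWord_eq_filter_append_filter (lo := x) (hi := x) (l := []) (by omega) (by simp)
      (by simp; grind)]
    simp [Finset.filter_erase]
  have hS : ∀ z ∈ S, x + 1 < z ∨ z + 1 < x := by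
    simp only [S, List.mem_append, mem_descWord, Finset.mem_filter]
    grind
  rw [hbw, haw, hbw', haw']
  simpa [S] using (heckeEquiv_cons_comm hS).symm.append_append (descWord (b.filter (x < ·)))
    (descWord (a.filter (· < x)))

theorem heckeEquiv_insert_erase_succ (hxa : x ∈ a) (hx1a : x + 1 ∈ a) (hx2a : x + 2 ∉ a)
    (hxb : x ∉ b) (hx1b : x + 1 ∈ b) (hb : ∀ z ∈ b, z < x → z + 1 < x) :
    descWord b ++ descWord a ≈ₕ descWord (insert x b) ++ descWord (a.erase (x + 1)) := by
  set S := descWord (b.filter (· < x)) ++ descWord (a.filter (x + 1 < ·))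
  have hbw : descWord b =
      descWord (b.filter (x + 1 < ·)) ++ [x + 1] ++ descWord (b.filter (· < x)) :=
    descWord_eq_filter_append_filter (by omega) (by simp) (by simp; grind)
  have haw : descWord a =
      descWord (a.filter (x + 1 < ·)) ++ [x + 1, x] ++ descWord (a.filter (· < x)) :=
    descWord_eq_filter_append_filter (by omega) (by simp) (by simp; grind)
  have hbw' : descWord (insert x b) =
      descWord (b.filter (x + 1 < ·)) ++ [x + 1, x] ++ descWord (b.filter (· < x)) := by
    rw [descWord_eq_filter_append_filter (lo := x) (hi := x + 1) (l := [x + 1, x]) (by omega)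
      (by simp) (by simp; grind)]
    simp [Finset.filter_insert]
  have haw' : descWord (a.erase (x + 1)) =
      descWord (a.filter (x + 1 < ·)) ++ [x] ++ descWord (a.filter (· < x)) := by
    rw [descWord_eq_filter_append_filter (lo := x) (hi := x + 1) (l := [x]) (by omega)
      (by simp) (by simp; grind)]
    simp [Finset.filter_erase]
  have hS : ∀ z ∈ S, x + 1 + 1 < z ∨ z + 1 < x + 1 := by
    simp only [S, List.mem_append, mem_descWord, Finset.mem_filter]
    grind
  have hS' : ∀ z ∈ S, x + 1 < z ∨ z + 1 < x := by
    simp only [S, List.mem_append, mem_descWord, Finset.mem_filter]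
    grind
  rw [hbw, haw, hbw', haw']
  simpa [S] using (heckeEquiv_cons_append_pair hS hS').append_append
    (descWord (b.filter (x + 1 < ·))) (descWord (a.filter (· < x)))

end Words

theorem pairAux_subset (L : List ℕ) (rest : Finset ℕ) : pairAux L rest ⊆ rest := by
  induction L generalizing rest with
  | nil => exact subset_rfl
  | cons c L ih =>
    rw [pairAux]
    split_ifs
    · exact (ih _).trans (Finset.erase_subset _ _)
    · exact ih rest

/-- A letter `c ∈ L` with `m ≤ c ≤ x` is paired with a letter of `[c, x)`, because the unpaired
letter `x` is still available when `c` is processed. -/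
theorem countP_le_card_filter_of_mem_pairAux {L : List ℕ} {rest : Finset ℕ} {x : ℕ}
    (hx : x ∈ pairAux L rest) (m : ℕ) :
    L.countP (fun z => m ≤ z ∧ z ≤ x) ≤ (rest.filter (fun z => m ≤ z ∧ z < x)).card := by
  induction L generalizing rest with
  | nil => simp
  | cons c L ih =>
    have hxr : x ∈ rest := pairAux_subset _ _ hx
    rw [pairAux] at hx
    split_ifs at hx with hc
    · set μ := (rest.filter (c ≤ ·)).min' hc
      have hμ : μ ∈ rest ∧ c ≤ μ := Finset.mem_filter.1 (Finset.min'_mem _ hc)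
      have hxμ : x ≠ μ := Finset.ne_of_mem_erase (pairAux_subset _ _ hx)
      have hrec := ih hx
      rw [Finset.filter_erase] at hrec
      rw [List.countP_cons]
      by_cases hcx : m ≤ c ∧ c ≤ x
      · have hμx : μ ≤ x := Finset.min'_le _ _ (Finset.mem_filter.2 ⟨hxr, hcx.2⟩)
        have hμf : μ ∈ rest.filter (fun z => m ≤ z ∧ z < x) :=
          Finset.mem_filter.2 ⟨hμ.1, hcx.1.trans hμ.2, lt_of_le_of_ne hμx hxμ.symm⟩
        rw [Finset.card_erase_of_mem hμf] at hrec
        have := Finset.card_pos.2 ⟨μ, hμf⟩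
        rw [if_pos (decide_eq_true hcx)]
        omega
      · have := Finset.card_erase_le (s := rest.filter (fun z => m ≤ z ∧ z < x)) (a := μ)
        rw [if_neg (by simpa using hcx)]
        omega
    · have hcx : ¬ c ≤ x := fun h => hc ⟨x, Finset.mem_filter.2 ⟨hxr, h⟩⟩
      simpa [List.countP_cons, hcx] using ih hx

/-- A letter `y > x` of `rest` left unpaired would contradict the maximality of `x`; its partner
`c` exceeds `x`, since a letter `c ≤ x` would be paired with a letter `≤ x`. -/
theorem exists_mem_of_lt_of_mem_pairAux {L : List ℕ} {rest : Finset ℕ} {x y : ℕ}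
    (hx : x ∈ pairAux L rest) (hmax : ∀ z ∈ pairAux L rest, z ≤ x) (hy : y ∈ rest)
    (hxy : x < y) : ∃ c ∈ L, x < c ∧ c ≤ y := by
  induction L generalizing rest with
  | nil => exact absurd (hmax y hy) (not_le.2 hxy)
  | cons c L ih =>
    have hxr : x ∈ rest := pairAux_subset _ _ hx
    rw [pairAux] at hx hmax
    split_ifs at hx hmax with hc
    · set μ := (rest.filter (c ≤ ·)).min' hc
      have hμ : μ ∈ rest ∧ c ≤ μ := Finset.mem_filter.1 (Finset.min'_mem _ hc)
      by_cases hyμ : y = μ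
      · refine ⟨c, List.mem_cons_self, ?_, hyμ ▸ hμ.2⟩
        by_contra! hcx
        have : μ ≤ x := Finset.min'_le _ _ (Finset.mem_filter.2 ⟨hxr, hcx⟩)
        omega
      · obtain ⟨d, hd, hxd⟩ := ih hx hmax (Finset.mem_erase.2 ⟨hyμ, hy⟩)
        exact ⟨d, List.mem_cons_of_mem _ hd, hxd⟩
    · obtain ⟨d, hd, hxd⟩ := ih hx hmax hy
      exact ⟨d, List.mem_cons_of_mem _ hd, hxd⟩

section LargestUnpaired

variable {a b : Finset ℕ} {x : ℕ}

theorem mem_of_mem_unpairedLow (hx : x ∈ unpairedLow a b) : x ∈ a :=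
  pairAux_subset _ _ hx

theorem notMem_of_mem_unpairedLow (hx : x ∈ unpairedLow a b) : x ∉ b := by
  intro hxb
  have h := countP_le_card_filter_of_mem_pairAux hx x
  have hempty : a.filter (fun z => x ≤ z ∧ z < x) = ∅ :=
    Finset.filter_false_of_mem fun z _ hz => by omega
  rw [countP_descWord, hempty, Finset.card_empty, Nat.le_zero, Finset.card_eq_zero] at h
  exact Finset.notMem_empty x (h ▸ Finset.mem_filter.2 ⟨hxb, le_rfl, le_rfl⟩)

theorem Ico_subset_of_mem_unpairedLow (hx : x ∈ unpairedLow a b) {w : ℕ}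
    (hw : Finset.Ico w x ⊆ b) : Finset.Ico w x ⊆ a := by
  have h := countP_le_card_filter_of_mem_pairAux hx w
  rw [countP_descWord] at h
  have hb : Finset.Ico w x ⊆ b.filter (fun z => w ≤ z ∧ z ≤ x) := fun z hz =>
    Finset.mem_filter.2 ⟨hw hz, (Finset.mem_Ico.1 hz).1, (Finset.mem_Ico.1 hz).2.le⟩
  have ha : a.filter (fun z => w ≤ z ∧ z < x) ⊆ Finset.Ico w x := fun z hz =>
    Finset.mem_Ico.2 (Finset.mem_filter.1 hz).2
  rw [← Finset.eq_of_subset_of_card_le ha ((Finset.card_le_card hb).trans h)]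
  exact Finset.filter_subset _ _

theorem succ_mem_of_mem_unpairedLow (hx : x ∈ unpairedLow a b)
    (hmax : ∀ y ∈ unpairedLow a b, y ≤ x) (hx1 : x + 1 ∈ a) : x + 1 ∈ b := by
  obtain ⟨c, hc, hxc, hcx⟩ := exists_mem_of_lt_of_mem_pairAux hx hmax hx1 (Nat.lt_succ_self x)
  rwa [show c = x + 1 by omega, mem_descWord] at hc

theorem add_one_lt_of_mem_unpairedLow (hFC : FullyCommutative (descWord b ++ descWord a))
    (hx : x ∈ unpairedLow a b) :
    ∀ z ∈ b, z < x → z + 1 < x := by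
  classical
  intro z hz hzx
  by_contra hzx'
  have hzrun : Finset.Ico z x ⊆ b := fun y hy => by
    rwa [show y = z by simp at hy; omega]
  have hrun : ∃ w, Finset.Ico w x ⊆ b := ⟨z, hzrun⟩
  -- `w` is the bottom of the maximal run of letters of `b` ending at `x - 1`.
  set w := Nat.find hrun
  have hwb : Finset.Ico w x ⊆ b := Nat.find_spec hrun
  have hwz : w ≤ z := Nat.find_min' hrun hzrun
  have hwa := Ico_subset_of_mem_unpairedLow hx hwb
  have hw1a : w + 1 ∈ a := by
    rcases (show w + 1 = x ∨ w + 1 < x by omega) with h | h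
    · exact h ▸ mem_of_mem_unpairedLow hx
    · exact hwa (Finset.mem_Ico.2 ⟨by omega, h⟩)
  refine not_fullyCommutative_of_mem (hwb (by simp; omega)) (hwa (by simp; omega)) hw1a
    (fun y hy hyw => ?_) hFC
  by_contra hyw'
  have hyrun : Finset.Ico y x ⊆ b := fun u hu => by
    rcases (show u = y ∨ w ≤ u by simp at hu; omega) with rfl | h
    · exact hy
    · exact hwb (Finset.mem_Ico.2 ⟨h, (Finset.mem_Ico.1 hu).2⟩)
  have := Nat.find_min' hrun hyrun
  omega

end LargestUnpaired

theorem exists_of_fStarPair_eq_some {a b a' b' : Finset ℕ}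
    (hf : fStarPair a b = some (a', b')) :
    ∃ x ∈ unpairedLow a b, (∀ y ∈ unpairedLow a b, y ≤ x) ∧ b' = insert x b ∧
      a' = if x + 1 ∈ a ∧ x + 1 ∈ b then a.erase (x + 1) else a.erase x := by
  unfold fStarPair at hf
  split_ifs at hf with hU
  refine ⟨_, Finset.max'_mem _ hU, Finset.le_max' _, ?_⟩
  dsimp only at hf
  split_ifs at hf ⊢ <;> obtain ⟨rfl, rfl⟩ := Prod.mk.inj (Option.some.inj hf) <;> exact ⟨rfl, rfl⟩

theorem card_add_card_of_fStarPair_eq_some {a b a' b' : Finset ℕ}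
    (hf : fStarPair a b = some (a', b')) : a'.card + b'.card = a.card + b.card := by
  obtain ⟨x, hx, -, rfl, rfl⟩ := exists_of_fStarPair_eq_some hf
  have hxa := mem_of_mem_unpairedLow hx
  rw [Finset.card_insert_of_notMem (notMem_of_mem_unpairedLow hx)]
  have := Finset.card_pos.2 ⟨x, hxa⟩
  split_ifs with hx1
  · rw [Finset.card_erase_of_mem hx1.1]; omega
  · rw [Finset.card_erase_of_mem hxa]; omega

theorem heckeEquiv_of_fStarPair_eq_some {a b a' b' : Finset ℕ}
    (hFC : FullyCommutative (descWord b ++ descWord a)) (hf : fStarPair a b = some (a', b')) :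
    descWord b ++ descWord a ≈ₕ descWord b' ++ descWord a' := by
  obtain ⟨x, hx, hmax, rfl, rfl⟩ := exists_of_fStarPair_eq_some hf
  have hxa := mem_of_mem_unpairedLow hx
  have hxb := notMem_of_mem_unpairedLow hx
  have hb := add_one_lt_of_mem_unpairedLow hFC hx
  split_ifs with hx1
  · have hx2a : x + 2 ∉ a := fun hx2a =>
      not_fullyCommutative_of_mem hx1.2 hx1.1 hx2a (fun z hz hzx => by grind) hFC
    exact heckeEquiv_insert_erase_succ hxa hx1.1 hx2a hxb hx1.2 hb
  · have hx1a : x + 1 ∉ a := fun h => hx1 ⟨h, succ_mem_of_mem_unpairedLow hx hmax h⟩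
    exact heckeEquiv_insert_erase hxa hx1a hxb hb

theorem exists_of_fStar_eq_some {i : ℕ} {h h' : ℕ → Finset ℕ} (hf : fStar i h = some h') :
    ∃ a' b', fStarPair (h i) (h (i + 1)) = some (a', b') ∧
      h' = Function.update (Function.update h i a') (i + 1) b' := by
  unfold fStar at hf
  rcases hpair : fStarPair (h i) (h (i + 1)) with _ | ⟨a', b'⟩ <;> rw [hpair] at hf
  · cases hf
  · exact ⟨a', b', rfl, (Option.some.inj hf).symm⟩

theorem factorWord_add (k n : ℕ) (h : ℕ → Finset ℕ) :
    factorWord (k + n) h = factorWord n (fun j => h (k + j)) ++ factorWord k h := by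
  simp [factorWord, List.range_add, List.map_reverse, Function.comp_def]

theorem factorWord_congr {m : ℕ} {g h : ℕ → Finset ℕ} (hgh : ∀ j < m, g j = h j) :
    factorWord m g = factorWord m h := by
  unfold factorWord
  congr 1
  exact List.map_congr_left fun j hj => by rw [hgh j (by simpa using hj)]

theorem length_factorWord (m : ℕ) (h : ℕ → Finset ℕ) :
    (factorWord m h).length = totalLen m h := by
  induction m with
  | zero => rfl
  | succ m ih =>
    rw [factorWord_add, totalLen, Finset.sum_range_succ, List.length_append, ← totalLen, ← ih]
    simp [factorWord, length_descWord, add_comm]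

theorem factorWord_eq_append_append {m i : ℕ} (hi : i + 1 < m) (h : ℕ → Finset ℕ) :
    factorWord m h = factorWord (m - (i + 2)) (fun j => h (i + 2 + j)) ++
      (descWord (h (i + 1)) ++ descWord (h i)) ++ factorWord i h := by
  obtain ⟨n, rfl⟩ := Nat.exists_eq_add_of_le (show i + 2 ≤ m by omega)
  rw [factorWord_add, Nat.add_sub_cancel_left, factorWord_add i 2, List.append_assoc]
  simp [factorWord, List.range_succ]

theorem factorWord_update_update {m i : ℕ} (hi : i + 1 < m) (h : ℕ → Finset ℕ)
    (a b : Finset ℕ) :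
    factorWord m (Function.update (Function.update h i a) (i + 1) b) =
      factorWord (m - (i + 2)) (fun j => h (i + 2 + j)) ++ (descWord b ++ descWord a) ++
        factorWord i h := by
  rw [factorWord_eq_append_append hi,
    factorWord_congr (m := m - (i + 2)) (h := fun j => h (i + 2 + j)) fun j _ => ?_,
    factorWord_congr (m := i) (h := h) fun j hj => ?_]
  · simp
  · rw [Function.update_of_ne (by omega), Function.update_of_ne (by omega)]
  · rw [Function.update_of_ne (by omega), Function.update_of_ne (by omega)]

/-- If `f_i^⋆` is defined on a fully-commutative decreasing factorization `h`,
then `f_i^⋆ h` is 0-Hecke equivalent to `h`, is again fully-commutative, has the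
same excess, and agrees with `h` in every factor except the `i`-th and `(i+1)`-th
(0-indexed here: factors `i` and `i+1`). -/
theorem fStar_well_defined (m i : ℕ) (h h' : ℕ → Finset ℕ)
    (hi : i + 1 < m)
    (hfc : FullyCommutative (factorWord m h))
    (hf : fStar i h = some h') :
    HeckeEquiv (factorWord m h) (factorWord m h') ∧
    FullyCommutative (factorWord m h') ∧
    excess m h' = excess m h ∧
    (∀ j, j ≠ i → j ≠ i + 1 → h' j = h j) := by
  obtain ⟨a', b', hpair, rfl⟩ := exists_of_fStar_eq_some hf
  rw [factorWord_eq_append_append hi h] at hfc ⊢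
  rw [factorWord_update_update hi]
  have hequiv := (heckeEquiv_of_fStarPair_eq_some hfc.of_append_append hpair).append_append
    (factorWord (m - (i + 2)) fun j => h (i + 2 + j)) (factorWord i h)
  refine ⟨hequiv, hfc.of_heckeEquiv hequiv, ?_, fun j hji hji1 => ?_⟩
  · rw [excess, excess, ← length_factorWord, ← length_factorWord, factorWord_update_update hi,
      factorWord_eq_append_append hi h, reducedLength_congr hequiv]
    have := card_add_card_of_fStarPair_eq_some hpair
    simp only [List.length_append, length_descWord]
    omega
  · rw [Function.update_of_ne hji1, Function.update_of_ne hji]
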